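/- arXiv:2603.17991 — 5 statements merged into one kernel-verified Lean document; each statement's English description precedes it below -/
import Mathlib

section
/- Let R be a commutative ring and ∂ : R → R a derivation. If a ∈ R and I is an ideal of R closed under ∂ with a^n ∈ I for some n ≥ 1, then (∂a)^(2n-1) ∈ I. -/
section Aux

variable {R : Type*} [CommRing R] [Algebra ℚ R]

private lemma kap_cancel_nat (I : Ideal R) (m : ℕ) (hm : 1 ≤ m) (x : R)
    (h : (m : R) * x ∈ I) : x ∈ I := by
  have h1 : algebraMap ℚ R (1 / m) * ((m : R) * x) ∈ I := I.mul_mem_left _ h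
  have h2 : algebraMap ℚ R (1 / m) * ((m : R) * x) = x := by
    rw [← mul_assoc]
    have : algebraMap ℚ R (1 / m) * (m : R) = 1 := by
      rw [show ((m : R) = algebraMap ℚ R (m : ℚ)) by simp, ← map_mul]
      have hm0 : (m : ℚ) ≠ 0 := by positivity
      rw [one_div, inv_mul_cancel₀ hm0, map_one]
    rw [this, one_mul]
  rwa [h2] at h1

private lemma kap_dpow (d : R → R)
    (hleib : ∀ x y : R, d (x * y) = d x * y + x * d y) (a : R) :
    ∀ k : ℕ, d (a ^ (k + 1)) = (k + 1 : ℕ) * a ^ k * d a := by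
  intro k
  induction k with
  | zero => simp
  | succ k ih =>
    rw [pow_succ, hleib, ih]
    push_cast
    ring

end Aux

/-- Kaplansky's Lemma 1.7: in a `ℚ`-algebra `R` with a derivation `∂`, if `I` is a
differential ideal and `a ^ n ∈ I` with `n ≥ 1`, then `(∂ a) ^ (2 * n - 1) ∈ I`. -/
theorem kaplansky_power_of_derivative
    (R : Type*) [CommRing R] [Algebra ℚ R]
    (d : R → R)
    (hadd : ∀ x y : R, d (x + y) = d x + d y)
    (hleib : ∀ x y : R, d (x * y) = d x * y + x * d y)
    (I : Ideal R) (hI : ∀ x ∈ I, d x ∈ I)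
    (a : R) (n : ℕ) (hn : 1 ≤ n) (ha : a ^ n ∈ I) :
    (d a) ^ (2 * n - 1) ∈ I := by
  -- key claim
  have key : ∀ k : ℕ, 1 ≤ k → k ≤ n → a ^ (n - k) * (d a) ^ (2 * k - 1) ∈ I := by
    intro k
    induction k with
    | zero => omega
    | succ k ih =>
      intro _ hkn
      rcases Nat.eq_zero_or_pos k with hk0 | hk1
      · -- base case k+1 = 1 : a^(n-1) * d a ∈ I
        subst hk0
        have hd : d (a ^ n) ∈ I := hI _ ha
        have hn' : n = (n - 1) + 1 := by omega
        rw [hn', kap_dpow d hleib] at hd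
        rw [mul_assoc] at hd
        have := kap_cancel_nat I ((n-1)+1) (by omega) _ hd
        simpa using this
      · -- inductive step
        have hkn' : k ≤ n := by omega
        have hmem := ih hk1 hkn'
        have hd : d (a ^ (n - k) * (d a) ^ (2 * k - 1)) ∈ I := hI _ hmem
        rw [hleib] at hd
        -- rewrite exponents
        have e1 : n - k = (n - k - 1) + 1 := by omega
        have e2 : 2 * k - 1 = (2 * k - 2) + 1 := by omega
        rw [e1, kap_dpow d hleib, e2, kap_dpow d hleib] at hd
        have hd2 := I.mul_mem_left (d a) hd
        -- hd2 : d a * ((n-k) a^(n-k-1) (d a) * (d a)^(2k-2+1) + a^(n-k-1+1) * ((2k-1)(d a)^(2k-2) d (d a))) ∈ I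
        -- second piece in I via hmem
        have hsec : d a * (a ^ ((n-k-1)+1) * (((2*k-2)+1 : ℕ) * d a ^ (2*k-2) * d (d a))) ∈ I := by
          have : a ^ ((n-k-1)+1) * d a ^ ((2*k-2)+1) ∈ I := by rw [← e1, ← e2]; exact hmem
          have h2 : (((2*k-2)+1 : ℕ) : R) * d (d a) * (a ^ ((n-k-1)+1) * d a ^ ((2*k-2)+1)) ∈ I :=
            I.mul_mem_left _ this
          have heq : d a * (a ^ ((n-k-1)+1) * (((2*k-2)+1 : ℕ) * d a ^ (2*k-2) * d (d a)))
              = (((2*k-2)+1 : ℕ) : R) * d (d a) * (a ^ ((n-k-1)+1) * d a ^ ((2*k-2)+1)) := by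
            ring
          rwa [heq]
        have hfirst : d a * ((((n-k-1)+1 : ℕ) : R) * a ^ (n-k-1) * d a * d a ^ ((2*k-2)+1)) ∈ I := by
          have := I.sub_mem hd2 hsec
          have heq : d a * ((((n-k-1)+1:ℕ):R) * a ^ (n-k-1) * d a * d a ^ ((2*k-2)+1) +
              a ^ ((n-k-1)+1) * ((((2*k-2)+1:ℕ):R) * d a ^ (2*k-2) * d (d a))) -
              d a * (a ^ ((n-k-1)+1) * ((((2*k-2)+1:ℕ):R) * d a ^ (2*k-2) * d (d a)))
              = d a * ((((n-k-1)+1:ℕ):R) * a ^ (n-k-1) * d a * d a ^ ((2*k-2)+1)) := by ring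
          rwa [heq] at this
        -- reorganize: = (n-k) * (a^(n-k-1) * (d a)^(2k+1))
        have heq2 : d a * ((((n-k-1)+1:ℕ):R) * a ^ (n-k-1) * d a * d a ^ ((2*k-2)+1))
            = (((n-k-1)+1:ℕ):R) * (a ^ (n-k-1) * d a ^ ((2*k-2)+3)) := by ring
        rw [heq2] at hfirst
        have := kap_cancel_nat I ((n-k-1)+1) (by omega) _ hfirst
        have e3 : n - (k+1) = n - k - 1 := by omega
        have e4 : 2 * (k+1) - 1 = (2*k-2)+3 := by omega
        rw [e3, e4]
        exact this
  have := key n hn le_rfl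
  simpa using this
end

section
/- Let (R, ∂) be a differential ring which is a ℚ-algebra, and let I be a radical differential ideal of R. Then every minimal prime ideal over I is a differential ideal. -/
/-- In a radical differential ideal, `a * b ∈ I` implies `a * d b ∈ I`. -/
lemma aux_mul_deriv_mem {R : Type*} [CommRing R]
    (d : R → R) (hleib : ∀ x y : R, d (x * y) = d x * y + x * d y)
    (I : Ideal R) (hrad : I.radical = I) (hI : ∀ x ∈ I, d x ∈ I)
    {a b : R} (hab : a * b ∈ I) : a * d b ∈ I := by
  have hd : d (a * b) ∈ I := hI _ hab
  have hsq : (a * d b) ^ 2 ∈ I := by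
    have h1 : a * d b * d (a * b) ∈ I := I.mul_mem_left _ hd
    have h2 : (a * b) * (d b * d a) ∈ I := I.mul_mem_right _ hab
    have : (a * d b) ^ 2 = a * d b * d (a * b) - (a * b) * (d b * d a) := by
      rw [hleib]; ring
    rw [this]
    exact I.sub_mem h1 h2
  rw [← hrad]
  exact ⟨2, hsq⟩

/-- Minimal prime principle: every minimal prime over a radical differential ideal in a
characteristic-zero differential ring is a differential ideal. -/
theorem minimal_prime_over_differential_ideal_is_differential
    (R : Type*) [CommRing R] [Algebra ℚ R]
    (d : R → R)
    (hadd : ∀ x y : R, d (x + y) = d x + d y)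
    (hleib : ∀ x y : R, d (x * y) = d x * y + x * d y)
    (I : Ideal R) (hrad : I.radical = I) (hI : ∀ x ∈ I, d x ∈ I)
    (P : Ideal R) (hP : P ∈ I.minimalPrimes) :
    ∀ x ∈ P, d x ∈ P := by
  intro x hx
  obtain ⟨hPp, hIP⟩ := hP.1
  -- Step 1: find s ∉ P and n with s * x ^ n ∈ I
  have hkey : ∃ s ∉ P, ∃ n : ℕ, s * x ^ n ∈ I := by
    by_contra hcon
    push_neg at hcon
    -- the multiplicative set {s * x^n : s ∉ P}
    let S : Submonoid R :=
      { carrier := {r | ∃ s ∉ P, ∃ n : ℕ, r = s * x ^ n}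
        one_mem' := ⟨1, (Ideal.ne_top_iff_one P).mp hPp.ne_top, 0, by ring⟩
        mul_mem' := by
          rintro r₁ r₂ ⟨s₁, hs₁, n₁, rfl⟩ ⟨s₂, hs₂, n₂, rfl⟩
          refine ⟨s₁ * s₂, fun h => ?_, n₁ + n₂, by ring⟩
          rcases hPp.mem_or_mem h with h | h
          exacts [hs₁ h, hs₂ h] }
    have hdisj : Disjoint (I : Set R) (S : Set R) := by
      rw [Set.disjoint_left]
      rintro r hr ⟨s, hs, n, rfl⟩
      exact hcon s hs n hr
    obtain ⟨Q, hQp, hIQ, hQdisj⟩ := Ideal.exists_le_prime_disjoint I S hdisj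
    have hQP : Q ≤ P := by
      intro y hy
      by_contra hyP
      exact Set.disjoint_left.mp hQdisj hy ⟨y, hyP, 0, by ring⟩
    have hPQ : P ≤ Q := hP.2 ⟨hQp, hIQ⟩ hQP
    have hxQ : x ∈ Q := hPQ hx
    exact Set.disjoint_left.mp hQdisj hxQ ⟨1, (Ideal.ne_top_iff_one P).mp hPp.ne_top, 1, by ring⟩
  obtain ⟨s, hs, n, hsx⟩ := hkey
  -- bump exponent to n+1
  have hsx1 : s * x ^ (n + 1) ∈ I := by
    have := I.mul_mem_left x hsx
    simpa [pow_succ, mul_comm, mul_assoc, mul_left_comm] using this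
  -- Step 2: induction: s * (d x)^k * x^(n+1-k) ∈ I for all k ≤ n+1
  have hind : ∀ k, k ≤ n + 1 → s * d x ^ k * x ^ (n + 1 - k) ∈ I := by
    intro k
    induction k with
    | zero => intro _; simpa using hsx1
    | succ k ih =>
      intro hk
      have hk' : k ≤ n + 1 := Nat.le_of_succ_le hk
      have h1 : s * d x ^ k * x ^ (n + 1 - k) ∈ I := ih hk'
      have hsub : n + 1 - k = (n + 1 - (k + 1)) + 1 := by omega
      have h2 : (s * d x ^ k * x ^ (n + 1 - (k + 1))) * x ∈ I := by
        rw [hsub] at h1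
        have : s * d x ^ k * x ^ (n + 1 - (k + 1)) * x
            = s * d x ^ k * (x ^ (n + 1 - (k + 1)) * x ^ 1) := by ring
        rw [this, ← pow_add]
        exact h1
      have h3 := aux_mul_deriv_mem d hleib I hrad hI h2
      have : s * d x ^ (k + 1) * x ^ (n + 1 - (k + 1))
          = s * d x ^ k * x ^ (n + 1 - (k + 1)) * d x := by ring
      rw [this]
      exact h3
  have hfin : s * d x ^ (n + 1) ∈ I := by simpa using hind (n + 1) le_rfl
  -- Step 3: (s * d x)^(n+1) ∈ I, so s * d x ∈ I ⊆ P, so d x ∈ P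
  have hpow : (s * d x) ^ (n + 1) ∈ I := by
    have : (s * d x) ^ (n + 1) = s ^ n * (s * d x ^ (n + 1)) := by ring
    rw [this]
    exact I.mul_mem_left _ hfin
  have hsd : s * d x ∈ I := by
    rw [← hrad]; exact ⟨n + 1, hpow⟩
  rcases hPp.mem_or_mem (hIP hsd) with h | h
  · exact absurd h hs
  · exact h
end

section
/- In the differential polynomial ring K{x} over a field K of characteristic zero, the radical of the differential ideal [x^2] equals the ideal generated by all derivatives x^(r), r ≥ 0. Consequently K{x}/√[x^2] ≅ K. -/
open MvPolynomial

section Aux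

variable {K : Type*} [Field K] [CharZero K]

local notation "R" => MvPolynomial ℕ K

/-- cancel a unit in ideal membership -/
lemma aux_unit_cancel {I : Ideal R} {r z : R} (hr : IsUnit r) (h : r * z ∈ I) : z ∈ I := by
  obtain ⟨v, rfl⟩ := hr
  have := I.mul_mem_left (↑v⁻¹ : R) h
  simpa [← mul_assoc] using this

lemma aux_nat_unit (n : ℕ) (hn : 0 < n) : IsUnit ((n : ℕ) : R) := by
  have h1 : ((n : K)) ≠ 0 := Nat.cast_ne_zero.mpr hn.ne'
  have h2 : IsUnit ((n : K)) := isUnit_iff_ne_zero.mpr h1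
  have := h2.map (C : K →+* R)
  simpa using this

/-- a differentially stable generating set spans a differentially stable ideal -/
lemma aux_dstable (d : Derivation K R R) (s : Set R)
    (hs : ∀ p ∈ s, d p ∈ Ideal.span s) :
    ∀ p ∈ Ideal.span s, d p ∈ Ideal.span s := by
  intro p hp
  refine Submodule.span_induction (p := fun q _ => d q ∈ Ideal.span s)
    (fun x hx => hs x hx) (by simp) (fun x y _ _ hx hy => by simpa using add_mem hx hy)
    (fun a x hx hdx => ?_) hp
  show d (a • x) ∈ Ideal.span s
  have : d (a • x) = a * d x + x * d a := by
    simp [smul_eq_mul, d.leibniz]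
  rw [this]
  exact add_mem ((Ideal.span s).mul_mem_left a hdx) ((Ideal.span s).mul_mem_right (d a) hx)

/-- one descent step: from `a^(m+1) * c^(2j+1) ∈ I` to `a^m * c^(2j+3) ∈ I`. -/
lemma aux_step (d : Derivation K R R) (I : Ideal R)
    (hI : ∀ p ∈ I, d p ∈ I) (a : R) (m j : ℕ)
    (h : a ^ (m + 1) * (d a) ^ (2 * j + 1) ∈ I) :
    a ^ m * (d a) ^ (2 * j + 3) ∈ I := by
  set c := d a with hc
  set u := a ^ (m + 1) * c ^ (2 * j + 1) with hu
  have hdu : d u ∈ I := hI u h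
  have h1 : d u * c ∈ I := I.mul_mem_right c hdu
  have h2 : u * d c ∈ I := I.mul_mem_right (d c) h
  have key : ((m + 1 : ℕ) : R) * (a ^ m * c ^ (2 * j + 3)) =
      d u * c - ((2 * j + 1 : ℕ) : R) * (u * d c) := by
    have : d u = a ^ (m + 1) • d (c ^ (2 * j + 1)) + c ^ (2 * j + 1) • d (a ^ (m + 1)) :=
      d.leibniz _ _
    rw [this, d.leibniz_pow, d.leibniz_pow]
    simp only [smul_eq_mul, nsmul_eq_mul, Nat.add_sub_cancel, hu, ← hc]
    push_cast
    ring
  have hmem : ((m + 1 : ℕ) : R) * (a ^ m * c ^ (2 * j + 3)) ∈ I := by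
    rw [key]
    exact sub_mem h1 (I.mul_mem_left _ h2)
  exact aux_unit_cancel (aux_nat_unit (m + 1) (Nat.succ_pos m)) hmem

lemma aux_descend (d : Derivation K R R) (I : Ideal R)
    (hI : ∀ p ∈ I, d p ∈ I) (a : R) :
    ∀ m j : ℕ, a ^ m * (d a) ^ (2 * j + 1) ∈ I → (d a) ^ (2 * (m + j) + 1) ∈ I := by
  intro m
  induction m with
  | zero => intro j h; simpa using h
  | succ m ih =>
    intro j h
    have h1 := aux_step d I hI a m j h
    have h2 : a ^ m * (d a) ^ (2 * (j + 1) + 1) ∈ I := by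
      rw [show 2 * (j + 1) + 1 = 2 * j + 3 by ring]; exact h1
    have h3 := ih (j + 1) h2
    rw [show 2 * (m + 1 + j) + 1 = 2 * (m + (j + 1)) + 1 by ring]
    exact h3

/-- the radical of a differential ideal is differential -/
lemma aux_deriv_mem_radical (d : Derivation K R R) (I : Ideal R)
    (hI : ∀ p ∈ I, d p ∈ I) (a : R) (ha : a ∈ I.radical) : d a ∈ I.radical := by
  obtain ⟨n, hn⟩ := ha
  rcases n with _ | m
  · -- 1 ∈ I
    simp only [pow_zero] at hn
    exact Ideal.le_radical (by simpa using I.mul_mem_left (d a) hn)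
  · -- a^(m+1) ∈ I
    have hbase : a ^ m * (d a) ^ (2 * 0 + 1) ∈ I := by
      have hd : d (a ^ (m + 1)) ∈ I := hI _ hn
      have : ((m + 1 : ℕ) : R) * (a ^ m * d a) = d (a ^ (m + 1)) := by
        rw [d.leibniz_pow]
        simp only [smul_eq_mul, nsmul_eq_mul, Nat.add_sub_cancel]
        try push_cast
        try ring
      have hm : ((m + 1 : ℕ) : R) * (a ^ m * d a) ∈ I := this ▸ hd
      simpa using aux_unit_cancel (aux_nat_unit (m + 1) (Nat.succ_pos m)) hm
    have := aux_descend d I hI a m 0 hbase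
    exact ⟨2 * (m + 0) + 1, this⟩

/-- any polynomial minus its constant term lies in the ideal of the variables -/
lemma aux_sub_constant (p : R) :
    p - C (constantCoeff p) ∈ Ideal.span (Set.range (X : ℕ → R)) := by
  set J := Ideal.span (Set.range (X : ℕ → R)) with hJ
  induction p using MvPolynomial.induction_on with
  | C a => simp
  | add p q hp hq =>
    have : p + q - C (constantCoeff (p + q)) =
        (p - C (constantCoeff p)) + (q - C (constantCoeff q)) := by
      simp [map_add]; ring
    rw [this]; exact add_mem hp hq
  | mul_X p n hp =>
    have hXn : (X n : R) ∈ J := Ideal.subset_span ⟨n, rfl⟩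
    have : constantCoeff (p * X n) = 0 := by simp
    rw [this, map_zero, sub_zero]
    exact J.mul_mem_left p hXn

end Aux

/-- In `K{x}` (char 0), the radical of the differential ideal `[x²]` (the ideal generated by
`x²` and all of its derivatives) equals the ideal generated by all the variables `x⁽ʳ⁾`;
consequently `K{x}/√[x²] ≅ K`. -/
theorem radical_of_x_sq_differential_ideal
    (K : Type*) [Field K] [CharZero K] :
    letI d : Derivation K (MvPolynomial ℕ K) (MvPolynomial ℕ K) :=
      MvPolynomial.mkDerivation K (fun r => X (r + 1))
    letI I : Ideal (MvPolynomial ℕ K) :=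
      Ideal.span {p | ∃ j : ℕ, p = (fun q => d q)^[j] ((X 0 : MvPolynomial ℕ K) ^ 2)}
    I.radical = Ideal.span (Set.range (X : ℕ → MvPolynomial ℕ K)) ∧
      Nonempty ((MvPolynomial ℕ K ⧸ I.radical) ≃ₐ[K] K) := by
  set d : Derivation K (MvPolynomial ℕ K) (MvPolynomial ℕ K) :=
    MvPolynomial.mkDerivation K (fun r => X (r + 1)) with hd
  set I : Ideal (MvPolynomial ℕ K) :=
    Ideal.span {p | ∃ j : ℕ, p = (fun q => d q)^[j] ((X 0 : MvPolynomial ℕ K) ^ 2)} with hI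
  set R := MvPolynomial ℕ K
  set J : Ideal R := Ideal.span (Set.range (X : ℕ → R)) with hJdef
  -- I is differentially stable
  have hSd : ∀ p ∈ {p : R | ∃ j : ℕ, p = (fun q => d q)^[j] ((X 0 : R) ^ 2)}, d p ∈ I := by
    rintro p ⟨j, rfl⟩
    exact Ideal.subset_span ⟨j + 1, by
      rw [Function.iterate_succ_apply']⟩
  have hId : ∀ p ∈ I, d p ∈ I := aux_dstable d _ hSd
  -- J is differentially stable
  have hJd : ∀ p ∈ J, d p ∈ J := by
    refine aux_dstable d _ ?_
    rintro p ⟨r, rfl⟩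
    have : d (X r) = X (r + 1) := MvPolynomial.mkDerivation_X K _ r
    rw [this]
    exact Ideal.subset_span ⟨r + 1, rfl⟩
  -- all variables are in the radical of I
  have hXrad : ∀ r : ℕ, (X r : R) ∈ I.radical := by
    intro r
    induction r with
    | zero => exact ⟨2, Ideal.subset_span ⟨0, rfl⟩⟩
    | succ r ih =>
      have := aux_deriv_mem_radical d I hId (X r) ih
      rwa [show d (X r) = X (r + 1) from MvPolynomial.mkDerivation_X K _ r] at this
  -- J = ker (aeval 0)
  have hker : J = RingHom.ker (MvPolynomial.aeval (0 : ℕ → K) : R →ₐ[K] K) := by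
    apply le_antisymm
    · rw [Ideal.span_le]
      rintro p ⟨r, rfl⟩
      simp only [SetLike.mem_coe, RingHom.mem_ker]
      show (MvPolynomial.aeval (0 : ℕ → K)) (X r : MvPolynomial ℕ K) = 0
      rw [MvPolynomial.aeval_X]
      rfl
    · intro p hp
      rw [RingHom.mem_ker] at hp
      rw [MvPolynomial.aeval_zero] at hp
      have h0 : constantCoeff p = 0 := by
        have : Function.Injective (algebraMap K K) := (algebraMap K K).injective
        exact this (by simpa using hp)
      have := aux_sub_constant (K := K) p
      rwa [h0, map_zero, sub_zero] at this
  have hsurj : Function.Surjective (MvPolynomial.aeval (0 : ℕ → K) : R →ₐ[K] K) :=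
    fun k => ⟨C k, by simp⟩
  have hprime : J.IsPrime := by
    rw [hker]
    exact RingHom.ker_isPrime _
  -- the main equality
  have hmain : I.radical = J := by
    apply le_antisymm
    · rw [hprime.radical_le_iff, Ideal.span_le]
      rintro p ⟨j, rfl⟩
      have hX0sq : (X 0 : R) ^ 2 ∈ J := by
        have : (X 0 : R) ∈ J := Ideal.subset_span ⟨0, rfl⟩
        rw [sq]; exact J.mul_mem_left _ this
      induction j with
      | zero => simpa using hX0sq
      | succ j ihj =>
        rw [Function.iterate_succ_apply']
        exact hJd _ ihj
    · rw [hJdef, Ideal.span_le]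
      rintro p ⟨r, rfl⟩
      exact hXrad r
  refine ⟨hmain, ?_⟩
  rw [hmain, hker]
  exact ⟨Ideal.quotientKerAlgEquivOfSurjective hsurj⟩
end

section
/- In the differential polynomial ring K{x,y} over a characteristic-zero field K, the element y' lies in the radical of the differential ideal [y^2 - x^3, x']. In fact (y')^3 ∈ [y^2 - x^3, x']. -/
open MvPolynomial

/-- In `K{x,y}` (char 0), with variables indexed by `Fin 2 × ℕ` (`x⁽ⁱ⁾ = X (0,i)`,
`y⁽ʲ⁾ = X (1,j)`) and derivation `∂(X (i,r)) = X (i,r+1)`, one has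
`(y')³ ∈ [y² - x³, x']` and hence `y' ∈ √[y² - x³, x']`. -/
theorem yprime_in_radical_of_cusp_system
    (K : Type*) [Field K] [CharZero K] :
    letI d : Derivation K (MvPolynomial (Fin 2 × ℕ) K) (MvPolynomial (Fin 2 × ℕ) K) :=
      MvPolynomial.mkDerivation K (fun v => X (v.1, v.2 + 1))
    letI u : MvPolynomial (Fin 2 × ℕ) K := X (1, 0) ^ 2 - X (0, 0) ^ 3
    letI v : MvPolynomial (Fin 2 × ℕ) K := X (0, 1)
    letI I : Ideal (MvPolynomial (Fin 2 × ℕ) K) :=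
      Ideal.span ({p | ∃ j : ℕ, p = (fun q => d q)^[j] u} ∪
        {p | ∃ j : ℕ, p = (fun q => d q)^[j] v})
    (X (1, 1) : MvPolynomial (Fin 2 × ℕ) K) ^ 3 ∈ I ∧
      (X (1, 1) : MvPolynomial (Fin 2 × ℕ) K) ∈ I.radical := by
  set d : Derivation K (MvPolynomial (Fin 2 × ℕ) K) (MvPolynomial (Fin 2 × ℕ) K) :=
    MvPolynomial.mkDerivation K (fun v => X (v.1, v.2 + 1)) with hd
  set u : MvPolynomial (Fin 2 × ℕ) K := X (1, 0) ^ 2 - X (0, 0) ^ 3 with hu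
  set v : MvPolynomial (Fin 2 × ℕ) K := X (0, 1) with hv
  set I : Ideal (MvPolynomial (Fin 2 × ℕ) K) :=
    Ideal.span ({p | ∃ j : ℕ, p = (fun q => d q)^[j] u} ∪
      {p | ∃ j : ℕ, p = (fun q => d q)^[j] v}) with hI
  have hX : ∀ p : Fin 2 × ℕ, d (X p) = X (p.1, p.2 + 1) := by
    intro p; rw [hd, mkDerivation_X]
  have h2 : d (2 : MvPolynomial (Fin 2 × ℕ) K) = 0 := by
    rw [show (2 : MvPolynomial (Fin 2 × ℕ) K) = ((2 : ℕ) : MvPolynomial (Fin 2 × ℕ) K)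
      by norm_cast]
    exact d.map_natCast 2
  have h3 : d (3 : MvPolynomial (Fin 2 × ℕ) K) = 0 := by
    rw [show (3 : MvPolynomial (Fin 2 × ℕ) K) = ((3 : ℕ) : MvPolynomial (Fin 2 × ℕ) K)
      by norm_cast]
    exact d.map_natCast 3
  have hdu : (fun q => d q)^[1] u
      = 2 * X (1,0) * X (1,1) - 3 * X (0,0) ^ 2 * X (0,1) := by
    show d u = _
    rw [hu]
    simp only [map_sub, Derivation.leibniz_pow, hX, smul_eq_mul, nsmul_eq_mul]
    push_cast
    ring
  have hddu : (fun q => d q)^[2] u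
      = 2 * X (1,1) ^ 2 + 2 * X (1,0) * X (1,2)
        - 6 * X (0,0) * X (0,1) ^ 2 - 3 * X (0,0) ^ 2 * X (0,2) := by
    have h : (fun q => d q)^[2] u = d ((fun q => d q)^[1] u) := by
      rw [Function.iterate_succ_apply']
    rw [h, hdu]
    simp only [map_sub, Derivation.leibniz, Derivation.leibniz_pow, hX, h2, h3,
      smul_eq_mul, nsmul_eq_mul]
    push_cast
    ring
  have hdv : (fun q => d q)^[1] v = X (0,2) := by
    show d v = _
    rw [hv, hX]
  have gu : ∀ j : ℕ, (fun q => d q)^[j] u ∈ I :=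
    fun j => Ideal.subset_span (Or.inl ⟨j, rfl⟩)
  have gv : ∀ j : ℕ, (fun q => d q)^[j] v ∈ I :=
    fun j => Ideal.subset_span (Or.inr ⟨j, rfl⟩)
  -- key identity (doubled to avoid fractions)
  have key : 2 * (X (1, 1) : MvPolynomial (Fin 2 × ℕ) K) ^ 3
      = X (1,1) * ((fun q => d q)^[2] u)
        - X (1,2) * ((fun q => d q)^[1] u)
        - 3 * X (0,0) ^ 2 * X (1,2) * ((fun q => d q)^[0] v)
        + 6 * X (0,0) * X (1,1) * X (0,1) * ((fun q => d q)^[0] v)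
        + 3 * X (0,0) ^ 2 * X (1,1) * ((fun q => d q)^[1] v) := by
    rw [hdu, hddu, hdv]
    show _ = _ - _ - _ * v + _ * v + _
    rw [hv]
    ring
  have twomem : 2 * (X (1, 1) : MvPolynomial (Fin 2 × ℕ) K) ^ 3 ∈ I := by
    rw [key]
    exact add_mem (add_mem (sub_mem (sub_mem
      (Ideal.mul_mem_left _ _ (gu 2)) (Ideal.mul_mem_left _ _ (gu 1)))
      (Ideal.mul_mem_left _ _ (gv 0))) (Ideal.mul_mem_left _ _ (gv 0)))
      (Ideal.mul_mem_left _ _ (gv 1))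
  have hmem : (X (1, 1) : MvPolynomial (Fin 2 × ℕ) K) ^ 3 ∈ I := by
    have heq : (X (1, 1) : MvPolynomial (Fin 2 × ℕ) K) ^ 3
        = C ((2 : K)⁻¹) * (2 * X (1, 1) ^ 3) := by
      rw [← mul_assoc, show (2 : MvPolynomial (Fin 2 × ℕ) K) = C (2 : K) from
        (map_ofNat C 2).symm, ← C_mul]
      norm_num
    rw [heq]
    exact Ideal.mul_mem_left _ _ twomem
  exact ⟨hmem, ⟨3, hmem⟩⟩
end

section
/- Let (K,∂) be a differential field and u ∈ K{x_1,...,x_n}. For a differential point η of V(u), the derivation of the linearization commutes with linearization: ∂(L[u,η]) = L[∂u, η] in κ(η){y_1,...,y_n}, where L[u,η] = Σ_{i,j} (∂u/∂x_i^(j))(η) · y_i^(j). -/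
/-!
The commutator of `∂/∂xᵢ⁽ʲ⁾` with the derivation `d` of `K{x}` is again a derivation, and it
vanishes on constants, so it is determined by its values on the variables: it is `∂/∂xᵢ⁽ʲ⁻¹⁾`
for `j > 0` and `0` for `j = 0`. Evaluating at `η`, the coefficients of `L[∂u,η]` are
`∂aⱼ + aⱼ₋₁`, where `aⱼ` are those of `L[u,η]`; this is exactly what the Leibniz rule produces
when `∂` is applied to `L[u,η] = Σ aⱼ yⱼ`, because the top coefficient `a_{r+1}` vanishes.
-/

open MvPolynomial

theorem map_zero_of_map_add {A : Type*} [AddGroup A] {d : A → A}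
    (hdadd : ∀ p q, d (p + q) = d p + d q) : d 0 = 0 :=
  (AddMonoidHom.mk' d hdadd).map_zero

theorem map_one_of_leibniz {A : Type*} [NonAssocSemiring A] [IsLeftCancelAdd A] {d : A → A}
    (hdleib : ∀ p q, d (p * q) = d p * q + p * d q) : d 1 = 0 :=
  (add_eq_left (a := d 1)).mp (by simpa using (hdleib 1 1).symm)

section Commutator

variable {σ R : Type*} [CommRing R] {dR : R → R}
  {d : MvPolynomial σ R → MvPolynomial σ R}
  (hdadd : ∀ p q, d (p + q) = d p + d q)
  (hdleib : ∀ p q, d (p * q) = d p * q + p * d q)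
  (hdC : ∀ k : R, d (C k) = C (dR k))

noncomputable def pderivCommutator (w : σ) : Derivation R (MvPolynomial σ R) (MvPolynomial σ R) :=
  Derivation.mk'
    { toFun := fun p => pderiv w (d p) - d (pderiv w p)
      map_add' := fun p q => by simp only [hdadd, map_add]; abel
      map_smul' := fun c p => by
        simp only [smul_eq_C_mul, hdleib, hdC, pderiv_C_mul, map_add,
          RingHom.id_apply]
        ring }
    fun p q => by
      simp only [LinearMap.coe_mk, AddHom.coe_mk, hdleib, map_add, Derivation.leibniz,
        smul_eq_mul, hdadd]
      ring

theorem pderivCommutator_apply (w : σ) (p : MvPolynomial σ R) :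
    pderivCommutator hdadd hdleib hdC w p = pderiv w (d p) - d (pderiv w p) :=
  rfl

theorem pderivCommutator_X [DecidableEq σ] (w v : σ) :
    pderivCommutator hdadd hdleib hdC w (X v) = pderiv w (d (X v)) := by
  rw [pderivCommutator_apply, sub_eq_self]
  rcases eq_or_ne v w with rfl | hne
  · rw [pderiv_X_self, map_one_of_leibniz hdleib]
  · rw [pderiv_X_of_ne hne, map_zero_of_map_add hdadd]

end Commutator

section Jets

variable {ι R : Type*} [CommRing R] {dR : R → R}
  {d : MvPolynomial (ι × ℕ) R → MvPolynomial (ι × ℕ) R}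

theorem pderiv_zero_derivation_comm (hdadd : ∀ p q, d (p + q) = d p + d q)
    (hdleib : ∀ p q, d (p * q) = d p * q + p * d q) (hdC : ∀ k : R, d (C k) = C (dR k))
    (hdX : ∀ (i : ι) (j : ℕ), d (X (i, j)) = X (i, j + 1)) (i : ι) (p : MvPolynomial (ι × ℕ) R) :
    pderiv (i, 0) (d p) = d (pderiv (i, 0) p) := by
  classical
  have h : pderivCommutator hdadd hdleib hdC (i, 0) = 0 :=
    derivation_ext fun ⟨s, t⟩ => by
      rw [pderivCommutator_X, hdX, pderiv_X_of_ne (by simp)]; rfl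
  simpa [pderivCommutator_apply, sub_eq_zero] using congrArg (· p) h

theorem pderiv_succ_derivation_comm (hdadd : ∀ p q, d (p + q) = d p + d q)
    (hdleib : ∀ p q, d (p * q) = d p * q + p * d q) (hdC : ∀ k : R, d (C k) = C (dR k))
    (hdX : ∀ (i : ι) (j : ℕ), d (X (i, j)) = X (i, j + 1)) (i : ι) (j : ℕ)
    (p : MvPolynomial (ι × ℕ) R) :
    pderiv (i, j + 1) (d p) = d (pderiv (i, j + 1) p) + pderiv (i, j) p := by
  classical
  have h : pderivCommutator hdadd hdleib hdC (i, j + 1) = pderiv (i, j) :=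
    derivation_ext fun ⟨s, t⟩ => by
      simp only [pderivCommutator_X, hdX, pderiv_X, Pi.single_apply, Prod.mk.injEq,
        Nat.add_right_cancel_iff]
  simpa [pderivCommutator_apply, sub_eq_iff_eq_add'] using congrArg (· p) h

end Jets

theorem derivation_sum_C_mul_X {ι F : Type*} [CommRing F] {dF : F → F}
    {Dy : MvPolynomial (ι × ℕ) F → MvPolynomial (ι × ℕ) F}
    (hDyadd : ∀ p q, Dy (p + q) = Dy p + Dy q)
    (hDyleib : ∀ p q, Dy (p * q) = Dy p * q + p * Dy q)
    (hDyC : ∀ a : F, Dy (C a) = C (dF a))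
    (hDyX : ∀ (i : ι) (j : ℕ), Dy (X (i, j)) = X (i, j + 1))
    (i : ι) (N : ℕ) {a b : ℕ → F} (ha : a N = 0) (hb0 : b 0 = dF (a 0))
    (hb : ∀ j, b (j + 1) = dF (a (j + 1)) + a j) :
    Dy (∑ j ∈ Finset.range (N + 1), C (a j) * X (i, j))
      = ∑ j ∈ Finset.range (N + 1), C (b j) * X (i, j) := by
  have hsum := map_sum (AddMonoidHom.mk' Dy hDyadd) (fun j => C (a j) * X (i, j))
    (Finset.range (N + 1))
  simp only [AddMonoidHom.mk'_apply, hDyleib, hDyC, hDyX] at hsum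
  rw [hsum, Finset.sum_add_distrib, Finset.sum_range_succ', Finset.sum_range_succ,
    Finset.sum_range_succ' (fun j => C (b j) * X (i, j)), ha, hb0]
  simp only [hb, map_add, add_mul, Finset.sum_add_distrib, map_zero, zero_mul, add_zero]
  abel

theorem derivation_commutes_with_linearization_general
    (n : ℕ) (K : Type*) [Field K] (dK : K → K)
    (F : Type*) [Field F] (dF : F → F)
    -- the derivation on K{x₁,…,xₙ}
    (d : MvPolynomial (Fin n × ℕ) K → MvPolynomial (Fin n × ℕ) K)
    (hdadd : ∀ p q, d (p + q) = d p + d q)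
    (hdleib : ∀ p q, d (p * q) = d p * q + p * d q)
    (hdC : ∀ k : K, d (C k) = C (dK k))
    (hdX : ∀ (i : Fin n) (j : ℕ), d (X (i, j)) = X (i, j + 1))
    -- the derivation on κ(η){y₁,…,yₙ}, extending dF with ∂(yᵢ⁽ʲ⁾) = yᵢ⁽ʲ⁺¹⁾
    (Dy : MvPolynomial (Fin n × ℕ) F → MvPolynomial (Fin n × ℕ) F)
    (hDyadd : ∀ p q, Dy (p + q) = Dy p + Dy q)
    (hDyleib : ∀ p q, Dy (p * q) = Dy p * q + p * Dy q)
    (hDyC : ∀ a : F, Dy (C a) = C (dF a))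
    (hDyX : ∀ (i : Fin n) (j : ℕ), Dy (X (i, j)) = X (i, j + 1))
    -- a differential point of V(u)
    (η : MvPolynomial (Fin n × ℕ) K →+* F)
    (hdiff : ∀ p, η (d p) = dF (η p))
    (u : MvPolynomial (Fin n × ℕ) K) (r : ℕ)
    (hord : ∀ (i : Fin n) (j : ℕ), r ≤ j → pderiv (i, j) u = 0) :
    Dy (∑ i : Fin n, ∑ j ∈ Finset.range (r + 2),
        (C (η (pderiv (i, j) u)) * X (i, j) : MvPolynomial (Fin n × ℕ) F))
      = ∑ i : Fin n, ∑ j ∈ Finset.range (r + 2),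
          (C (η (pderiv (i, j) (d u))) * X (i, j) : MvPolynomial (Fin n × ℕ) F) := by
  refine (map_sum (AddMonoidHom.mk' Dy hDyadd) _ _).trans (Finset.sum_congr rfl fun i _ => ?_)
  exact derivation_sum_C_mul_X hDyadd hDyleib hDyC hDyX i (r + 1)
    (by simp only [hord i (r + 1) (by omega), map_zero])
    (by rw [pderiv_zero_derivation_comm hdadd hdleib hdC hdX, hdiff])
    (fun j => by rw [pderiv_succ_derivation_comm hdadd hdleib hdC hdX, map_add, hdiff])

/-- Derivation commutes with linearization: for a differential point `η` of `V(u)`,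
`∂(L[u,η]) = L[∂u,η]` in `κ(η){y₁,…,yₙ}`, where
`L[v,η] = Σ_{i,j} (∂v/∂xᵢ⁽ʲ⁾)(η) · yᵢ⁽ʲ⁾`. -/
theorem derivation_commutes_with_linearization
    (n : ℕ) (K : Type*) [Field K] (dK : K → K)
    (F : Type*) [Field F] (dF : F → F)
    (hdFadd : ∀ x y : F, dF (x + y) = dF x + dF y)
    (hdFleib : ∀ x y : F, dF (x * y) = dF x * y + x * dF y)
    -- the derivation on K{x₁,…,xₙ}
    (d : MvPolynomial (Fin n × ℕ) K → MvPolynomial (Fin n × ℕ) K)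
    (hdadd : ∀ p q, d (p + q) = d p + d q)
    (hdleib : ∀ p q, d (p * q) = d p * q + p * d q)
    (hdC : ∀ k : K, d (C k) = C (dK k))
    (hdX : ∀ (i : Fin n) (j : ℕ), d (X (i, j)) = X (i, j + 1))
    -- the derivation on κ(η){y₁,…,yₙ}, extending dF with ∂(yᵢ⁽ʲ⁾) = yᵢ⁽ʲ⁺¹⁾
    (Dy : MvPolynomial (Fin n × ℕ) F → MvPolynomial (Fin n × ℕ) F)
    (hDyadd : ∀ p q, Dy (p + q) = Dy p + Dy q)
    (hDyleib : ∀ p q, Dy (p * q) = Dy p * q + p * Dy q)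
    (hDyC : ∀ a : F, Dy (C a) = C (dF a))
    (hDyX : ∀ (i : Fin n) (j : ℕ), Dy (X (i, j)) = X (i, j + 1))
    -- a differential point of V(u)
    (η : MvPolynomial (Fin n × ℕ) K →+* F)
    (hdiff : ∀ p, η (d p) = dF (η p))
    (u : MvPolynomial (Fin n × ℕ) K) (r : ℕ)
    (hord : ∀ (i : Fin n) (j : ℕ), r ≤ j → pderiv (i, j) u = 0)
    (hη : ∀ k : ℕ, η (d^[k] u) = 0) :
    Dy (∑ i : Fin n, ∑ j ∈ Finset.range (r + 2),
        (C (η (pderiv (i, j) u)) * X (i, j) : MvPolynomial (Fin n × ℕ) F))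
      = ∑ i : Fin n, ∑ j ∈ Finset.range (r + 2),
          (C (η (pderiv (i, j) (d u))) * X (i, j) : MvPolynomial (Fin n × ℕ) F) :=
  derivation_commutes_with_linearization_general n K dK F dF d hdadd hdleib hdC hdX Dy hDyadd
    hDyleib hDyC hDyX η hdiff u r hord
end
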